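/- For the two-step process Choi state Υ = |0⟩⟨0|_B ⊗ (1/2)(|0⟩⟨0|_C ⊗ Φ_{AD} + |1⟩⟨1|_C ⊗ (𝕀/2)_A ⊗ (𝕀/2)_D) on four qubits, the relative entropy to the product of its marginals equals 1: S(Υ ‖ Υ_A ⊗ Υ_B ⊗ Υ_C ⊗ Υ_D) = 1, where Υ_A ⊗ Υ_B ⊗ Υ_C ⊗ Υ_D = (𝕀/2) ⊗ |0⟩⟨0| ⊗ (𝕀/2) ⊗ (𝕀/2). -/

import Mathlib

open Matrix Kronecker
open scoped ComplexOrder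

noncomputable section

/-- Base-2 matrix logarithm of a Hermitian matrix, via the spectral theorem
(with the convention `log 0 = 0`); `0` on non-Hermitian matrices. -/
def mlog2 {n : Type*} [Fintype n] [DecidableEq n] (A : Matrix n n ℂ) : Matrix n n ℂ :=
  if h : A.IsHermitian then
    (h.eigenvectorUnitary : Matrix n n ℂ) *
      Matrix.diagonal (fun i => (Real.logb 2 (h.eigenvalues i) : ℂ)) *
      (star h.eigenvectorUnitary : Matrix n n ℂ)
  else 0

/-- Quantum relative entropy `S(ρ‖σ) = Tr[ρ (log₂ ρ − log₂ σ)]`. -/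
def relEnt {n : Type*} [Fintype n] [DecidableEq n] (ρ σ : Matrix n n ℂ) : ℝ :=
  (Matrix.trace (ρ * (mlog2 ρ - mlog2 σ))).re

/-- Von Neumann entropy `H(ρ) = −Tr[ρ log₂ ρ]`. -/
def vnEnt {n : Type*} [Fintype n] [DecidableEq n] (ρ : Matrix n n ℂ) : ℝ :=
  -(Matrix.trace (ρ * mlog2 ρ)).re

/-- A density matrix: positive semidefinite with unit trace. -/
def IsDensity {n : Type*} [Fintype n] (ρ : Matrix n n ℂ) : Prop :=
  ρ.PosSemidef ∧ ρ.trace = 1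

/-- Partial trace over the second (B) factor. -/
def ptraceB {m n : Type*} [Fintype n] (M : Matrix (m × n) (m × n) ℂ) : Matrix m m ℂ :=
  Matrix.of fun i j => ∑ k, M (i, k) (j, k)

/-- Partial trace over the first (A) factor. -/
def ptraceA {m n : Type*} [Fintype m] (M : Matrix (m × n) (m × n) ℂ) : Matrix n n ℂ :=
  Matrix.of fun a b => ∑ k, M (k, a) (k, b)

/-- The Choi state `(id ⊗ M)(Φ)` of a map `M : M_d(ℂ) → M_{d'}(ℂ)`, where
`Φ = (1/d) ∑_{i,j} |ii⟩⟨jj|` is the maximally entangled state. -/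
def ChoiOf {d d' : ℕ} (M : Matrix (Fin d) (Fin d) ℂ → Matrix (Fin d') (Fin d') ℂ) :
    Matrix (Fin d × Fin d') (Fin d × Fin d') ℂ :=
  Matrix.of fun p q =>
    ((d : ℂ))⁻¹ * M (Matrix.single p.1 q.1 1) p.2 q.2

/-- Complete positivity of a linear map on matrices: every finite ancilla
extension `id_k ⊗ M` maps positive semidefinite matrices to positive
semidefinite matrices. -/
def IsCompletelyPositive {n m : Type*} [Fintype n] [DecidableEq n] [Fintype m] [DecidableEq m]
    (M : Matrix n n ℂ →ₗ[ℂ] Matrix m m ℂ) : Prop :=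
  ∀ (k : ℕ) (X : Matrix (Fin k × n) (Fin k × n) ℂ), X.PosSemidef →
    (Matrix.of fun (p q : Fin k × m) =>
      M (Matrix.of fun a b => X (p.1, a) (q.1, b)) p.2 q.2).PosSemidef

/-- The classical-quantum state `∑_x p_x |x⟩⟨x| ⊗ ρ_x`. -/
def cqState {ι m : Type*} [DecidableEq ι] (p : ι → ℝ) (ρ : ι → Matrix m m ℂ) :
    Matrix (ι × m) (ι × m) ℂ :=
  Matrix.of fun x y => if x.1 = y.1 then (p x.1 : ℂ) * ρ x.1 x.2 y.2 else 0

/-- The maximally entangled two-qubit state `Φ = (1/2) ∑_{i,j} |ii⟩⟨jj|`. -/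
def Phi2 : Matrix (Fin 2 × Fin 2) (Fin 2 × Fin 2) ℂ :=
  Matrix.of fun p q => if p.1 = p.2 ∧ q.1 = q.2 then (1 / 2 : ℂ) else 0

end

noncomputable section
/-- The four-qubit (A,B,C,D) two-step process Choi state
`Υ = |0⟩⟨0|_B ⊗ (1/2)(|0⟩⟨0|_C ⊗ Φ_{AD} + |1⟩⟨1|_C ⊗ 𝕀/2 ⊗ 𝕀/2)`. -/
def Yproc : Matrix (Fin 2 × Fin 2 × Fin 2 × Fin 2) (Fin 2 × Fin 2 × Fin 2 × Fin 2) ℂ :=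
  Matrix.of fun x y =>
    (if x.2.1 = 0 ∧ y.2.1 = 0 then 1 else 0) *
      ((1 / 2 : ℂ) *
        ((if x.2.2.1 = 0 ∧ y.2.2.1 = 0 then Phi2 (x.1, x.2.2.2) (y.1, y.2.2.2) else 0) +
          (if x.2.2.1 = 1 ∧ y.2.2.1 = 1 then
            (if x.1 = y.1 ∧ x.2.2.2 = y.2.2.2 then (1 / 4 : ℂ) else 0) else 0)))

def margA (Υ : Matrix (Fin 2 × Fin 2 × Fin 2 × Fin 2) (Fin 2 × Fin 2 × Fin 2 × Fin 2) ℂ) :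
    Matrix (Fin 2) (Fin 2) ℂ :=
  Matrix.of fun a a' => ∑ b : Fin 2, ∑ c : Fin 2, ∑ d : Fin 2,
    Υ (a, b, c, d) (a', b, c, d)

def margB (Υ : Matrix (Fin 2 × Fin 2 × Fin 2 × Fin 2) (Fin 2 × Fin 2 × Fin 2 × Fin 2) ℂ) :
    Matrix (Fin 2) (Fin 2) ℂ :=
  Matrix.of fun b b' => ∑ a : Fin 2, ∑ c : Fin 2, ∑ d : Fin 2,
    Υ (a, b, c, d) (a, b', c, d)

def margC (Υ : Matrix (Fin 2 × Fin 2 × Fin 2 × Fin 2) (Fin 2 × Fin 2 × Fin 2 × Fin 2) ℂ) :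
    Matrix (Fin 2) (Fin 2) ℂ :=
  Matrix.of fun c c' => ∑ a : Fin 2, ∑ b : Fin 2, ∑ d : Fin 2,
    Υ (a, b, c, d) (a, b, c', d)

def margD (Υ : Matrix (Fin 2 × Fin 2 × Fin 2 × Fin 2) (Fin 2 × Fin 2 × Fin 2 × Fin 2) ℂ) :
    Matrix (Fin 2) (Fin 2) ℂ :=
  Matrix.of fun d d' => ∑ a : Fin 2, ∑ b : Fin 2, ∑ c : Fin 2,
    Υ (a, b, c, d) (a, b, c, d')

/-- The product of the four single-site marginals `Υ_A ⊗ Υ_B ⊗ Υ_C ⊗ Υ_D`. -/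
def prodMarg (Υ : Matrix (Fin 2 × Fin 2 × Fin 2 × Fin 2) (Fin 2 × Fin 2 × Fin 2 × Fin 2) ℂ) :
    Matrix (Fin 2 × Fin 2 × Fin 2 × Fin 2) (Fin 2 × Fin 2 × Fin 2 × Fin 2) ℂ :=
  Matrix.of fun x y =>
    margA Υ x.1 y.1 * margB Υ x.2.1 y.2.1 * margC Υ x.2.2.1 y.2.2.1 *
      margD Υ x.2.2.2 y.2.2.2
end

/-!
`Υ = ½ |ψ⟩⟨ψ| + ⅛ P`, where `ψ = |0⟩_B |0⟩_C |Φ⟩_{AD}` and `P` is the projection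
onto `B = 0, C = 1`; these are orthogonal projections. The marginals are
`𝕀/2, |0⟩⟨0|, 𝕀/2, 𝕀/2`, so their product is `⅛ R` with `R` the projection onto
`B = 0`, which dominates both `|ψ⟩⟨ψ|` and `P`. The functional calculus of a combination
`a P + b Q` of orthogonal projections acts on the coefficients, hence
`log₂ Υ = -|ψ⟩⟨ψ| - 3 P` and `log₂ (⅛ R) = -3 R`, and
`Υ (log₂ Υ - log₂ (⅛ R)) = |ψ⟩⟨ψ|`, whose trace is `1`.
-/

theorem IsSelfAdjoint.mul_eq_zero_symm {R : Type*} [NonUnitalNonAssocSemiring R] [StarRing R]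
    {p q : R} (hp : IsSelfAdjoint p) (hq : IsSelfAdjoint q) (h : p * q = 0) : q * p = 0 := by
  simpa [hp.star_eq, hq.star_eq] using congrArg star h

theorem Real.logb_two_inv_two : Real.logb 2 2⁻¹ = -1 := by
  rw [Real.logb_inv, Real.logb_self_eq_one one_lt_two]

theorem Real.logb_two_inv_eight : Real.logb 2 8⁻¹ = -3 := by
  rw [Real.logb_inv, show (8 : ℝ) = 2 ^ 3 by norm_num, Real.logb_pow,
    Real.logb_self_eq_one one_lt_two]
  norm_num

theorem Complex.inv_sqrt_two_mul_self :
    ((Real.sqrt 2 : ℂ))⁻¹ * ((Real.sqrt 2 : ℂ))⁻¹ = 2⁻¹ := by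
  rw [← mul_inv, ← Complex.ofReal_mul, Real.mul_self_sqrt zero_le_two, Complex.ofReal_ofNat]

-- Off the Hermitian matrices both sides are the junk value `0`.
theorem mlog2_eq_cfc {n : Type*} [Fintype n] [DecidableEq n] (A : Matrix n n ℂ) :
    mlog2 A = cfc (Real.logb 2) A := by
  by_cases hA : A.IsHermitian
  · rw [hA.cfc_eq, IsHermitian.cfc, Unitary.conjStarAlgAut_apply, mlog2, dif_pos hA]
    rfl
  · rw [mlog2, dif_neg hA]
    exact (cfc_apply_of_not_predicate (R := ℝ) A hA).symm

namespace Matrix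

section Projection

variable {n R : Type*} [Fintype n] [Semiring R]

theorem diagonal_ite_mul_diagonal_ite [DecidableEq n] (p q : n → Prop) [DecidablePred p]
    [DecidablePred q] :
    (diagonal fun i => if p i then (1 : R) else 0) * diagonal (fun i => if q i then 1 else 0) =
      diagonal fun i => if p i ∧ q i then 1 else 0 := by
  rw [diagonal_mul_diagonal]
  congr 1
  funext i
  by_cases hp : p i <;> by_cases hq : q i <;> simp [hp, hq]

theorem isStarProjection_diagonal_ite [DecidableEq n] [StarRing R] (p : n → Prop)
    [DecidablePred p] : IsStarProjection (diagonal fun i => if p i then (1 : R) else 0) := by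
  refine ⟨?_, ?_⟩
  · rw [IsIdempotentElem, diagonal_ite_mul_diagonal_ite]
    simp only [and_self]
  · rw [IsSelfAdjoint, star_eq_conjTranspose, diagonal_conjTranspose]
    congr 1
    funext i
    by_cases hp : p i <;> simp [hp]

theorem isStarProjection_vecMulVec_star [StarRing R] {v : n → R} (hv : star v ⬝ᵥ v = 1) :
    IsStarProjection (vecMulVec v (star v)) := by
  refine ⟨?_, ?_⟩
  · rw [IsIdempotentElem, vecMulVec_mul_vecMulVec, hv, one_smul]
  · rw [IsSelfAdjoint, star_eq_conjTranspose, conjTranspose_vecMulVec, star_star]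

end Projection

section FunctionalCalculus

variable {n 𝕜 : Type*} [RCLike 𝕜] [Fintype n] [DecidableEq n]

theorem IsHermitian.cfc_eq_of_mulVec {A B : Matrix n n 𝕜} (hA : A.IsHermitian) {f : ℝ → ℝ}
    (hB : ∀ (μ : ℝ) (v : n → 𝕜), A *ᵥ v = μ • v → B *ᵥ v = f μ • v) :
    cfc f A = B := by
  set U : Matrix n n 𝕜 := ↑hA.eigenvectorUnitary
  have hBU : B * U = U * diagonal (RCLike.ofReal ∘ f ∘ hA.eigenvalues) := by
    refine ext_of_mulVec_single fun j => ?_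
    have hc : ((RCLike.ofReal ∘ f ∘ hA.eigenvalues) j : 𝕜) =
        f (hA.eigenvalues j) • (1 : 𝕜) := by
      simp [RCLike.real_smul_eq_coe_mul]
    rw [← mulVec_mulVec, ← mulVec_mulVec, eigenvectorUnitary_mulVec, diagonal_mulVec_single,
      hB _ _ (hA.mulVec_eigenvectorBasis j), mul_one, hc, Pi.single_smul', mulVec_smul,
      eigenvectorUnitary_mulVec]
  calc cfc f A = U * diagonal (RCLike.ofReal ∘ f ∘ hA.eigenvalues) * star U := by
        rw [hA.cfc_eq, IsHermitian.cfc, Unitary.conjStarAlgAut_apply]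
    _ = B * (U * star U) := by rw [← hBU, mul_assoc]
    _ = B := by rw [Unitary.mul_star_self_of_mem (SetLike.coe_mem _), mul_one]

/- `v = P v + Q v + (v - P v - Q v)`, and each summand is either zero or an eigenvector of
`a • P + b • Q` for the eigenvalue `a`, `b`, `0` respectively. -/
theorem smul_add_smul_mulVec_eq_of_mulVec_eq {P Q : Matrix n n 𝕜} (hP : IsIdempotentElem P)
    (hQ : IsIdempotentElem Q) (hPQ : P * Q = 0) (hQP : Q * P = 0) {a b μ : ℝ} {f : ℝ → ℝ}
    (hf : f 0 = 0) {v : n → 𝕜} (hv : (a • P + b • Q) *ᵥ v = μ • v) :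
    (f a • P + f b • Q) *ᵥ v = f μ • v := by
  have hPv : a • (P *ᵥ v) = μ • (P *ᵥ v) := by
    have hPX : P * (a • P + b • Q) = a • P := by
      rw [mul_add, mul_smul_comm, mul_smul_comm, hP.eq, hPQ, smul_zero, add_zero]
    rw [← smul_mulVec, ← hPX, ← mulVec_mulVec, hv, mulVec_smul]
  have hQv : b • (Q *ᵥ v) = μ • (Q *ᵥ v) := by
    have hQX : Q * (a • P + b • Q) = b • Q := by
      rw [mul_add, mul_smul_comm, mul_smul_comm, hQ.eq, hQP, smul_zero, zero_add]
    rw [← smul_mulVec, ← hQX, ← mulVec_mulVec, hv, mulVec_smul]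
  have hv' : μ • v = μ • (P *ᵥ v + Q *ᵥ v) := by
    rw [← hv, add_mulVec, smul_mulVec, smul_mulVec, hPv, hQv, smul_add]
  have hfP : f a • (P *ᵥ v) = f μ • (P *ᵥ v) := by
    rcases eq_or_ne (P *ᵥ v) 0 with h | h
    · simp [h]
    · rw [smul_left_injective ℝ h hPv]
  have hfQ : f b • (Q *ᵥ v) = f μ • (Q *ᵥ v) := by
    rcases eq_or_ne (Q *ᵥ v) 0 with h | h
    · simp [h]
    · rw [smul_left_injective ℝ h hQv]
  have hfv : f μ • v = f μ • (P *ᵥ v + Q *ᵥ v) := by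
    rcases eq_or_ne μ 0 with h | h
    · simp [h, hf]
    · exact congrArg (f μ • ·) (smul_right_injective _ h hv')
  rw [add_mulVec, smul_mulVec, smul_mulVec, hfP, hfQ, hfv, smul_add]

theorem cfc_smul_add_smul_of_isStarProjection {P Q : Matrix n n 𝕜} (hP : IsStarProjection P)
    (hQ : IsStarProjection Q) (hPQ : P * Q = 0) (a b : ℝ) {f : ℝ → ℝ} (hf : f 0 = 0) :
    cfc f (a • P + b • Q) = f a • P + f b • Q := by
  have hQP : Q * P = 0 := hP.isSelfAdjoint.mul_eq_zero_symm hQ.isSelfAdjoint hPQ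
  have hX : (a • P + b • Q).IsHermitian :=
    (hP.isSelfAdjoint.isHermitian.smul (.all a)).add (hQ.isSelfAdjoint.isHermitian.smul (.all b))
  exact hX.cfc_eq_of_mulVec fun μ v hv =>
    smul_add_smul_mulVec_eq_of_mulVec_eq hP.isIdempotentElem hQ.isIdempotentElem hPQ hQP hf hv

theorem cfc_smul_of_isStarProjection {P : Matrix n n 𝕜} (hP : IsStarProjection P) (a : ℝ)
    {f : ℝ → ℝ} (hf : f 0 = 0) : cfc f (a • P) = f a • P := by
  simpa using cfc_smul_add_smul_of_isStarProjection hP (.zero _) (mul_zero P) a 0 hf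

end FunctionalCalculus

end Matrix

namespace Yproc

local notation "ABCD" => Fin 2 × Fin 2 × Fin 2 × Fin 2

noncomputable section

/-- `|0⟩_B |0⟩_C |Φ⟩_{AD}`. -/
def phiVec : ABCD → ℂ := fun x =>
  if x.2.1 = 0 ∧ x.2.2.1 = 0 ∧ x.1 = x.2.2.2 then ((Real.sqrt 2)⁻¹ : ℝ) else 0

def projPhi : Matrix ABCD ABCD ℂ := vecMulVec phiVec (star phiVec)

def projB0C1 : Matrix ABCD ABCD ℂ := diagonal fun x => if x.2.1 = 0 ∧ x.2.2.1 = 1 then 1 else 0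

def projB0 : Matrix ABCD ABCD ℂ := diagonal fun x => if x.2.1 = 0 then 1 else 0

end

theorem star_phiVec_dotProduct : star phiVec ⬝ᵥ phiVec = 1 := by
  norm_num [dotProduct, phiVec, Fintype.sum_prod_type, Fin.sum_univ_two,
    Complex.inv_sqrt_two_mul_self]

theorem isStarProjection_projPhi : IsStarProjection projPhi :=
  isStarProjection_vecMulVec_star star_phiVec_dotProduct

theorem isStarProjection_projB0C1 : IsStarProjection projB0C1 := isStarProjection_diagonal_ite _

theorem isStarProjection_projB0 : IsStarProjection projB0 := isStarProjection_diagonal_ite _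

theorem trace_projPhi : projPhi.trace = 1 := by
  rw [projPhi, trace_vecMulVec, dotProduct_comm, star_phiVec_dotProduct]

theorem projPhi_mul_projB0C1 : projPhi * projB0C1 = 0 := by
  rw [projPhi, projB0C1, vecMulVec_mul, ← vecMulVec_zero phiVec]
  congr 1
  funext x
  rw [vecMul_diagonal]
  simp only [Pi.star_apply, phiVec, apply_ite star, star_zero]
  split_ifs <;> simp_all

theorem projPhi_mul_projB0 : projPhi * projB0 = projPhi := by
  rw [projPhi, projB0, vecMulVec_mul]
  congr 1
  funext x
  rw [vecMul_diagonal]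
  simp only [Pi.star_apply, phiVec, apply_ite star, star_zero]
  split_ifs <;> simp_all

theorem projB0C1_mul_projB0 : projB0C1 * projB0 = projB0C1 := by
  rw [projB0C1, projB0, diagonal_ite_mul_diagonal_ite]
  simp only [and_iff_left_of_imp And.left]

theorem eq_smul_add_smul : Yproc = (2⁻¹ : ℝ) • projPhi + (8⁻¹ : ℝ) • projB0C1 := by
  ext ⟨a, b, c, d⟩ ⟨a', b', c', d'⟩
  simp only [Yproc, Phi2, projPhi, phiVec, projB0C1, of_apply, Matrix.add_apply, Matrix.smul_apply,
    vecMulVec_apply, diagonal_apply, Pi.star_apply, apply_ite star, star_zero, Complex.star_def,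
    Complex.conj_ofReal, Prod.mk.injEq]
  split_ifs <;> simp_all [Complex.inv_sqrt_two_mul_self]
  norm_num

theorem margA_eq : margA Yproc = (2⁻¹ : ℂ) • 1 := by
  ext i j
  fin_cases i <;> fin_cases j <;> norm_num [margA, Yproc, Phi2, Fin.sum_univ_two]

theorem margB_eq : margB Yproc = single 0 0 1 := by
  ext i j
  fin_cases i <;> fin_cases j <;> norm_num [margB, Yproc, Phi2, Fin.sum_univ_two]

theorem margC_eq : margC Yproc = (2⁻¹ : ℂ) • 1 := by
  ext i j
  fin_cases i <;> fin_cases j <;> norm_num [margC, Yproc, Phi2, Fin.sum_univ_two]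

theorem margD_eq : margD Yproc = (2⁻¹ : ℂ) • 1 := by
  ext i j
  fin_cases i <;> fin_cases j <;> norm_num [margD, Yproc, Phi2, Fin.sum_univ_two]

theorem prodMarg_eq : prodMarg Yproc = of fun x y : ABCD =>
    if x.1 = y.1 ∧ x.2.1 = 0 ∧ y.2.1 = 0 ∧ x.2.2.1 = y.2.2.1 ∧ x.2.2.2 = y.2.2.2
      then (1 / 8 : ℂ) else 0 := by
  ext ⟨a, b, c, d⟩ ⟨a', b', c', d'⟩
  simp only [prodMarg, margA_eq, margB_eq, margC_eq, margD_eq, of_apply, Matrix.smul_apply,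
    one_apply, single_apply, smul_eq_mul]
  split_ifs <;> grind

theorem prodMarg_eq_smul : prodMarg Yproc = (8⁻¹ : ℝ) • projB0 := by
  rw [prodMarg_eq]
  ext ⟨a, b, c, d⟩ ⟨a', b', c', d'⟩
  simp only [projB0, of_apply, Matrix.smul_apply, diagonal_apply, Prod.mk.injEq,
    Complex.real_smul, Complex.ofReal_inv, Complex.ofReal_ofNat]
  split_ifs <;> grind

theorem mlog2_eq : mlog2 Yproc = (-1 : ℝ) • projPhi + (-3 : ℝ) • projB0C1 := by
  rw [mlog2_eq_cfc, eq_smul_add_smul, cfc_smul_add_smul_of_isStarProjection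
    isStarProjection_projPhi isStarProjection_projB0C1 projPhi_mul_projB0C1 _ _ Real.logb_zero,
    Real.logb_two_inv_two, Real.logb_two_inv_eight]

theorem mlog2_prodMarg_eq : mlog2 (prodMarg Yproc) = (-3 : ℝ) • projB0 := by
  rw [mlog2_eq_cfc, prodMarg_eq_smul,
    cfc_smul_of_isStarProjection isStarProjection_projB0 _ Real.logb_zero,
    Real.logb_two_inv_eight]

theorem mul_mlog2_sub_mlog2_prodMarg :
    Yproc * (mlog2 Yproc - mlog2 (prodMarg Yproc)) = projPhi := by
  have hC1Phi : projB0C1 * projPhi = 0 := isStarProjection_projPhi.isSelfAdjoint.mul_eq_zero_symm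
    isStarProjection_projB0C1.isSelfAdjoint projPhi_mul_projB0C1
  rw [mlog2_eq, mlog2_prodMarg_eq, eq_smul_add_smul]
  simp only [mul_sub, mul_add, add_mul, smul_mul_smul_comm,
    isStarProjection_projPhi.isIdempotentElem.eq, isStarProjection_projB0C1.isIdempotentElem.eq,
    projPhi_mul_projB0C1, hC1Phi, projPhi_mul_projB0, projB0C1_mul_projB0, smul_zero]
  module

end Yproc

/-- the product of the marginals of `Υ` is
`(𝕀/2) ⊗ |0⟩⟨0| ⊗ (𝕀/2) ⊗ (𝕀/2)`, and `S(Υ ‖ Υ_A ⊗ Υ_B ⊗ Υ_C ⊗ Υ_D) = 1`. -/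
theorem total_correlations_Yproc :
    prodMarg Yproc = (Matrix.of fun x y : Fin 2 × Fin 2 × Fin 2 × Fin 2 =>
      if x.1 = y.1 ∧ x.2.1 = 0 ∧ y.2.1 = 0 ∧ x.2.2.1 = y.2.2.1 ∧ x.2.2.2 = y.2.2.2
        then (1 / 8 : ℂ) else 0) ∧
    relEnt Yproc (prodMarg Yproc) = 1 := by
  refine ⟨Yproc.prodMarg_eq, ?_⟩
  rw [relEnt, Yproc.mul_mlog2_sub_mlog2_prodMarg, Yproc.trace_projPhi, Complex.one_re]
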